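/- Fix integers n ≥ 2, r ≥ n, 1 ≤ q ≤ n and 0 ≤ p ≤ r−n. Then Σ_I ( ∏_{α=1}^{q−1} (p+q−i_α)_+ · ∏_{α=q}^{n−1} (i_α−p−q)_+ ) = σ_{q−1}(p+q−1) · σ_{n−q}(r−p−q), where the sum on the left is over all (n−1)-element subsets I = {i_1 < … < i_{n−1}} of [r] = {1,…,r}. -/

import Mathlib

open MeasureTheory Filter

noncomputable section

/-- `σ_b(a)`: sum over all `b`-element subsets `J` of `{1,…,a}` of the product of elements. -/
def sigmaFn (b a : ℕ) : ℕ := ∑ J ∈ (Finset.Icc 1 a).powersetCard b, ∏ j ∈ J, j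

/-- the `(α+1)`-st smallest element of a finite set of naturals (0-indexed). -/
def nthElt (I : Finset ℕ) (α : ℕ) : ℕ := (I.sort (· ≤ ·)).getD α 0

/-- the product `∏_{α=1}^{q−1} (p+q−i_α)_+ · ∏_{α=q}^{n−1} (i_α−p−q)_+`. -/
def pureNum (n p q : ℕ) (I : Finset ℕ) : ℤ :=
  ∏ α ∈ Finset.range (n - 1),
    if α + 1 < q then max ((p : ℤ) + q - nthElt I α) 0
    else max ((nthElt I α : ℤ) - p - q) 0

/-- the entry `k_{p,q}(π(r,I))` of the pure diagram `π(r,I)`. -/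
def kPure (n r p q : ℕ) (I : Finset ℕ) : ℝ :=
  ((r - n).factorial : ℝ) * (pureNum n p q I : ℝ) /
    (((p + q - 1).factorial : ℝ) * ((r - p - q).factorial : ℝ))

/-- `μ_{q,n}(r,p)`. -/
def muFn (n q r p : ℕ) : ℝ :=
  (1 / 2 ^ n) * ((p : ℝ) ^ (q - 1) * ((r : ℝ) - p - n) ^ (n - q)) /
    ((q - 1).factorial * (n - q).factorial)

/-!
Let `m = p + q`, list `I` as `i₀ < ⋯ < i_{n-2}` and let `c` be the number of its elements
below `m`. The factor of index `α` is nonzero only if `α < q - 1` exactly when `i_α < m`, so the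
product vanishes unless `c = q - 1`, and then it is `∏_{i ∈ I} |i - m|` (zero if `m ∈ I`).
The sum therefore runs over pairs `(A, B)` with `A ⊆ [1, m)` of size `q - 1` and `B ⊆ [m, r]` of
size `n - q`, and factors. The reflection `a ↦ m - a` and the shift `b ↦ b - m` turn the factors
into `σ_{q-1}(m - 1)` and `σ_{n-q}(r - m)`; the subsets of `{0, …, r - m}` containing `0`
contribute nothing.
-/

open Finset

lemma nthElt_eq_nth (I : Finset ℕ) (α : ℕ) : nthElt I α = Nat.nth (· ∈ I) α := by
  rw [Nat.nth_eq_getD_sort (p := (· ∈ I)) I.finite_toSet]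
  simp [nthElt]

lemma nthElt_lt_iff {I : Finset ℕ} {α : ℕ} (hα : α < #I) (m : ℕ) :
    nthElt I α < m ↔ α < #{i ∈ I | i < m} := by
  have hcount : Nat.count (· ∈ I) m = #{i ∈ I | i < m} := by
    rw [Nat.count_eq_card_filter_range]
    congr 1; ext i; simp [and_comm]
  have hα' : ∀ hf : (Set.ofPred (· ∈ I)).Finite, α < #hf.toFinset := fun hf => by
    simpa [Set.Finite.toFinset] using hα
  rw [nthElt_eq_nth, ← hcount]
  refine ⟨fun h => ?_, Nat.nth_lt_of_lt_count⟩
  calc α < α + 1 := α.lt_succ_self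
    _ = Nat.count (· ∈ I) (Nat.nth (· ∈ I) α + 1) := (Nat.count_nth_succ hα').symm
    _ ≤ Nat.count (· ∈ I) m := Nat.count_monotone _ h

lemma prod_range_card_nthElt {M : Type*} [CommMonoid M] (I : Finset ℕ) (g : ℕ → M) :
    ∏ α ∈ range #I, g (nthElt I α) = ∏ i ∈ I, g i := by
  conv_rhs => rw [← map_orderEmbOfFin_univ I rfl, prod_map]
  rw [← Fin.prod_univ_eq_prod_range]
  simp [orderEmbOfFin_apply, nthElt]

lemma ite_max_sub_eq_ite_abs (c : Prop) [Decidable c] (x a b : ℤ) :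
    (if c then max (a + b - x) 0 else max (x - a - b) 0) =
      if (c ↔ x < a + b) then |x - (a + b)| else 0 := by
  split_ifs <;> grind

lemma pureNum_eq_ite_prod_abs {n p q : ℕ} (hq : 1 ≤ q) (hqn : q ≤ n) {I : Finset ℕ}
    (hI : #I = n - 1) :
    pureNum n p q I =
      if #{i ∈ I | i < p + q} = q - 1 then ∏ i ∈ I, |(i : ℤ) - (p + q : ℕ)| else 0 := by
  set c := #{i ∈ I | i < p + q}
  have hfactor : ∀ α ∈ range (n - 1),
      (if α + 1 < q then max ((p : ℤ) + q - nthElt I α) 0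
        else max ((nthElt I α : ℤ) - p - q) 0) =
      if (α + 1 < q ↔ α < c) then |(nthElt I α : ℤ) - (p + q : ℕ)| else 0 := by
    intro α hα
    rw [ite_max_sub_eq_ite_abs]
    refine if_congr (iff_congr Iff.rfl ?_) (by push_cast; rfl) rfl
    exact_mod_cast nthElt_lt_iff (hI ▸ mem_range.1 hα) (p + q)
  rw [pureNum, prod_congr rfl hfactor]
  split_ifs with hc
  · rw [← hI, ← prod_range_card_nthElt I (fun i => |(i : ℤ) - (p + q : ℕ)|)]
    exact prod_congr rfl fun α _ => if_pos (by omega)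
  · have hcI : c ≤ n - 1 := hI ▸ card_filter_le _ _
    -- at index `min c (q - 1)` exactly one of `α < q - 1` and `α < c` holds
    exact prod_eq_zero (i := min c (q - 1)) (mem_range.2 (by omega)) (if_neg (by omega))

lemma sum_powersetCard_filter_card_eq {α R : Type*} [DecidableEq α] [CommSemiring R]
    (s : Finset α) (P : α → Prop) [DecidablePred P] (g : α → R) {k N : ℕ} (hk : k ≤ N) :
    ∑ I ∈ s.powersetCard N with #{i ∈ I | P i} = k, ∏ i ∈ I, g i =
      (∑ A ∈ {a ∈ s | P a}.powersetCard k, ∏ a ∈ A, g a) *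
        ∑ B ∈ {b ∈ s | ¬P b}.powersetCard (N - k), ∏ b ∈ B, g b := by
  have hsplit : ∀ {A B : Finset α}, A ⊆ {a ∈ s | P a} → B ⊆ {b ∈ s | ¬P b} →
      {i ∈ A ∪ B | P i} = A ∧ {i ∈ A ∪ B | ¬P i} = B := by
    intro A B hA hB
    have hPA : ∀ i ∈ A, P i := fun i hi => (mem_filter.1 (hA hi)).2
    have hPB : ∀ i ∈ B, ¬P i := fun i hi => (mem_filter.1 (hB hi)).2
    simp only [filter_union, filter_true_of_mem hPA, filter_false_of_mem hPB,
      filter_false_of_mem fun i hi => not_not.2 (hPA i hi), filter_true_of_mem hPB,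
      union_empty, empty_union, and_self]
  rw [sum_mul_sum, ← sum_product']
  refine sum_nbij' (fun I => ({i ∈ I | P i}, {i ∈ I | ¬P i})) (fun AB => AB.1 ∪ AB.2)
    ?_ ?_ ?_ ?_ ?_
  · intro I hI
    simp only [mem_filter, mem_powersetCard] at hI
    have := card_filter_add_card_filter_not (s := I) fun i => P i
    simp only [mem_product, mem_powersetCard]
    exact ⟨⟨filter_subset_filter _ hI.1.1, hI.2⟩, filter_subset_filter _ hI.1.1, by omega⟩
  · rintro ⟨A, B⟩ hAB
    simp only [mem_product, mem_powersetCard] at hAB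
    obtain ⟨hPA, hPB⟩ := hsplit hAB.1.1 hAB.2.1
    have hdisj : Disjoint A B := by
      rw [← hPA, ← hPB]; exact disjoint_filter_filter_not _ _ _
    simp only [mem_filter, mem_powersetCard, hPA, card_union_of_disjoint hdisj]
    exact ⟨⟨union_subset (hAB.1.1.trans (filter_subset _ _)) (hAB.2.1.trans (filter_subset _ _)),
      by omega⟩, hAB.1.2⟩
  · intro I _
    exact filter_union_filter_not_eq _ _
  · rintro ⟨A, B⟩ hAB
    simp only [mem_product, mem_powersetCard] at hAB
    obtain ⟨hPA, hPB⟩ := hsplit hAB.1.1 hAB.2.1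
    simp only [hPA, hPB]
  · intro I _
    exact (prod_filter_mul_prod_filter_not I P g).symm

lemma sum_powersetCard_prod_image {α β R : Type*} [DecidableEq β] [CommSemiring R]
    {s : Finset α} {e : α → β} (he : Set.InjOn e s) (k : ℕ) (f : β → R) :
    ∑ B ∈ (s.image e).powersetCard k, ∏ b ∈ B, f b =
      ∑ A ∈ s.powersetCard k, ∏ a ∈ A, f (e a) := by
  rw [← esymm_map_val, ← esymm_map_val, image_val_of_injOn he, Multiset.map_map]
  rfl

lemma sigmaFn_eq_sum_Icc_zero (k a : ℕ) :
    sigmaFn k a = ∑ J ∈ (Icc 0 a).powersetCard k, ∏ j ∈ J, j := by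
  refine sum_subset (powersetCard_mono (Icc_subset_Icc_left zero_le_one)) fun J hJ hJ' => ?_
  simp only [mem_powersetCard] at hJ hJ'
  have h0 : 0 ∈ J := by
    by_contra h0
    exact hJ' ⟨fun j hj => by grind, hJ.2⟩
  exact prod_eq_zero h0 rfl

lemma sum_powersetCard_Ico_prod_abs_sub {m : ℕ} (hm : 1 ≤ m) (k : ℕ) :
    ∑ A ∈ (Ico 1 m).powersetCard k, ∏ a ∈ A, |(a : ℤ) - m| = sigmaFn k (m - 1) := by
  have hreflect : (Ico 1 m).image (m - ·) = Ico 1 m := by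
    rw [Nat.Ico_image_const_sub_eq_Ico hm]; congr 1; omega
  have hIcc : Icc 1 (m - 1) = Ico 1 m := by ext; simp; omega
  have hinj : Set.InjOn (m - ·) (Ico 1 m) := fun a ha b hb h => by
    simp only [coe_Ico, Set.mem_Ico] at ha hb; simp only at h; omega
  rw [sigmaFn, hIcc]
  push_cast
  conv_rhs => rw [← hreflect, sum_powersetCard_prod_image hinj]
  refine sum_congr rfl fun A hA => prod_congr rfl fun a ha => ?_
  have := mem_Ico.1 ((mem_powersetCard.1 hA).1 ha)
  rw [Nat.cast_sub this.2.le, abs_sub_comm, abs_of_pos (by omega)]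

lemma sum_powersetCard_Icc_prod_abs_sub {m r : ℕ} (hmr : m ≤ r) (k : ℕ) :
    ∑ B ∈ (Icc m r).powersetCard k, ∏ b ∈ B, |(b : ℤ) - m| = sigmaFn k (r - m) := by
  have hshift : (Icc 0 (r - m)).image (· + m) = Icc m r := by
    rw [image_add_right_Icc, zero_add, Nat.sub_add_cancel hmr]
  rw [sigmaFn_eq_sum_Icc_zero, ← hshift,
    sum_powersetCard_prod_image (add_left_injective m).injOn]
  push_cast
  simp

theorem stmt2_general (n r p q : ℕ) (hr : n ≤ r) (hq1 : 1 ≤ q) (hqn : q ≤ n)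
    (hp : p ≤ r - n) :
    ∑ I ∈ (Finset.Icc 1 r).powersetCard (n - 1), pureNum n p q I =
      (sigmaFn (q - 1) (p + q - 1) : ℤ) * (sigmaFn (n - q) (r - p - q) : ℤ) := by
  have hlow : {i ∈ Icc 1 r | i < p + q} = Ico 1 (p + q) := by ext; simp; omega
  have hhigh : {i ∈ Icc 1 r | ¬i < p + q} = Icc (p + q) r := by ext; simp; omega
  calc ∑ I ∈ (Icc 1 r).powersetCard (n - 1), pureNum n p q I
      = ∑ I ∈ (Icc 1 r).powersetCard (n - 1) with #{i ∈ I | i < p + q} = q - 1,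
          ∏ i ∈ I, |(i : ℤ) - (p + q : ℕ)| := by
        rw [sum_filter]
        exact sum_congr rfl fun I hI =>
          pureNum_eq_ite_prod_abs hq1 hqn (mem_powersetCard.1 hI).2
    _ = _ := by
        rw [sum_powersetCard_filter_card_eq _ _ _ (by omega), hlow, hhigh,
          sum_powersetCard_Ico_prod_abs_sub (by omega),
          sum_powersetCard_Icc_prod_abs_sub (by omega), show n - 1 - (q - 1) = n - q by omega,
          Nat.sub_sub r]

theorem stmt2 (n r p q : ℕ) (hn : 2 ≤ n) (hr : n ≤ r) (hq1 : 1 ≤ q) (hqn : q ≤ n)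
    (hp : p ≤ r - n) :
    ∑ I ∈ (Finset.Icc 1 r).powersetCard (n - 1), pureNum n p q I =
      (sigmaFn (q - 1) (p + q - 1) : ℤ) * (sigmaFn (n - q) (r - p - q) : ℤ) :=
  stmt2_general n r p q hr hq1 hqn hp
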